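/- arXiv:1806.02408 — 3 statements merged into one kernel-verified Lean document; each statement's English description precedes it below -/
import Mathlib

section
/- Let X be a real Banach space, C ⊆ X closed and convex, and G a compact topological group acting continuously on X by continuous linear maps, with each g ∈ G mapping C into C; let θ be the Haar probability measure on G. Let F : X → ℝ be convex and lower semi-continuous, and suppose u ∈ C is a minimizer of F over C such that F(g·u) = F(u) for all g ∈ G. Then the G-average u_G := ∫_G g·u dθ(g) satisfies: u_G ∈ C, u_G is G-invariant (h·u_G = u_G for all h ∈ G), and u_G is a minimizer of F over C (indeed F(u_G) = F(u) = inf_C F). -/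
open MeasureTheory

/-!
Averaging over `G` preserves the closed convex set `C` and, since `F` is convex and lower
semicontinuous, also the closed convex sublevel set `{F ≤ F u}`, which contains the whole orbit of
`u`. So `F (u_G) ≤ F u = inf_C F`. Invariance of `u_G` is left invariance of the Haar measure:
`h • u_G = ∫ (h * g) • u dθ(g) = u_G`.
-/

theorem ConvexOn.map_integral_le_of_ae_le {α E : Type*} [MeasurableSpace α] {μ : Measure α}
    [IsProbabilityMeasure μ] [NormedAddCommGroup E] [NormedSpace ℝ E] [CompleteSpace E]
    {F : E → ℝ} (hF : ConvexOn ℝ Set.univ F) (hFlsc : LowerSemicontinuous F)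
    {f : α → E} (hf : Integrable f μ) {c : ℝ} (hle : ∀ᵐ a ∂μ, F (f a) ≤ c) :
    F (∫ a, f a ∂μ) ≤ c := by
  have hconvex : Convex ℝ {x | F x ≤ c} := by simpa using hF.convex_le c
  exact hconvex.integral_mem (hFlsc.isClosed_preimage c) hle hf

section Action

variable {G X : Type*} [Group G] [NormedAddCommGroup X] [NormedSpace ℝ X]
  [DistribMulAction G X] [SMulCommClass G ℝ X] [ContinuousConstSMul G X]

theorem smul_integral_eq_integral_smul {α : Type*} [MeasurableSpace α] (μ : Measure α) (h : G)
    (f : α → X) : h • ∫ a, f a ∂μ = ∫ a, h • f a ∂μ :=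
  let L : X ≃L[ℝ] X :=
    { DistribMulAction.toLinearEquiv ℝ X h with
      continuous_toFun := continuous_const_smul h
      continuous_invFun := continuous_const_smul h⁻¹ }
  (L.integral_comp_comm f).symm

theorem smul_integral_smul_eq_self [MeasurableSpace G] [MeasurableMul G] (μ : Measure G)
    [μ.IsMulLeftInvariant] (h : G) (u : X) : h • ∫ g, g • u ∂μ = ∫ g, g • u ∂μ := by
  simp only [smul_integral_eq_integral_smul, smul_smul]
  exact integral_mul_left_eq_self (fun g => g • u) h

end Action

theorem exists_invariant_minimizer_convex_general
    {X : Type*} [NormedAddCommGroup X] [NormedSpace ℝ X] [CompleteSpace X]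
    {G : Type*} [Group G] [TopologicalSpace G] [IsTopologicalGroup G] [CompactSpace G]
    [MeasurableSpace G] [BorelSpace G]
    [DistribMulAction G X] [SMulCommClass G ℝ X] [ContinuousSMul G X]
    (C : Set X) (hCclosed : IsClosed C) (hCconvex : Convex ℝ C)
    (hmaps : ∀ g : G, ∀ x ∈ C, g • x ∈ C)
    (θ : Measure G) [θ.IsHaarMeasure] [IsProbabilityMeasure θ]
    (F : X → ℝ) (hFconv : ConvexOn ℝ Set.univ F) (hFlsc : LowerSemicontinuous F)
    (u : X) (huC : u ∈ C) (hmin : ∀ v ∈ C, F u ≤ F v)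
    (hinv : ∀ g : G, F (g • u) = F u) :
    (∫ g, g • u ∂θ) ∈ C ∧
      (∀ h : G, h • (∫ g, g • u ∂θ) = ∫ g, g • u ∂θ) ∧
      (∀ v ∈ C, F (∫ g, g • u ∂θ) ≤ F v) ∧
      F (∫ g, g • u ∂θ) = F u := by
  have hint : Integrable (fun g : G => g • u) θ :=
    (continuous_id.smul continuous_const).integrable_of_hasCompactSupport (.of_compactSpace _)
  have hmemC : (∫ g, g • u ∂θ) ∈ C :=
    hCconvex.integral_mem hCclosed (ae_of_all _ fun g => hmaps g u huC) hint
  have heq : F (∫ g, g • u ∂θ) = F u :=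
    le_antisymm (hFconv.map_integral_le_of_ae_le hFlsc hint (ae_of_all _ fun g => (hinv g).le))
      (hmin _ hmemC)
  exact ⟨hmemC, fun h => smul_integral_smul_eq_self θ h u, fun v hv => heq ▸ hmin v hv, heq⟩

/-- Let `X` be a real Banach space, `C ⊆ X` closed and convex, and `G` a compact
topological group acting continuously on `X` by continuous linear maps, with each `g ∈ G` mapping
`C` into `C`; let `θ` be the Haar probability measure on `G`. Let `F : X → ℝ` be convex and lower
semi-continuous, and suppose `u ∈ C` is a minimizer of `F` over `C` with `F (g • u) = F u` for all
`g ∈ G`. Then the `G`-average `u_G := ∫_G g • u dθ(g)` satisfies: `u_G ∈ C`, `u_G` is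
`G`-invariant, and `u_G` is a minimizer of `F` over `C` with `F u_G = F u`. -/
theorem exists_invariant_minimizer_convex
    {X : Type*} [NormedAddCommGroup X] [NormedSpace ℝ X] [CompleteSpace X]
    {G : Type*} [Group G] [TopologicalSpace G] [IsTopologicalGroup G] [CompactSpace G]
    [MeasurableSpace G] [BorelSpace G]
    [DistribMulAction G X] [SMulCommClass G ℝ X] [ContinuousSMul G X]
    (C : Set X) (hCclosed : IsClosed C) (hCconvex : Convex ℝ C)
    (hmaps : ∀ g : G, ∀ x ∈ C, g • x ∈ C)
    (θ : Measure G) [θ.IsHaarMeasure] [θ.IsMulRightInvariant] [IsProbabilityMeasure θ]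
    (F : X → ℝ) (hFconv : ConvexOn ℝ Set.univ F) (hFlsc : LowerSemicontinuous F)
    (u : X) (huC : u ∈ C) (hmin : ∀ v ∈ C, F u ≤ F v)
    (hinv : ∀ g : G, F (g • u) = F u) :
    (∫ g, g • u ∂θ) ∈ C ∧
      (∀ h : G, h • (∫ g, g • u ∂θ) = ∫ g, g • u ∂θ) ∧
      (∀ v ∈ C, F (∫ g, g • u ∂θ) ≤ F v) ∧
      F (∫ g, g • u ∂θ) = F u :=
  exists_invariant_minimizer_convex_general C hCclosed hCconvex hmaps θ F hFconv hFlsc u huC hmin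
    hinv
end

section
/- Let X be a real Banach space, C ⊆ X closed and convex, and G a compact topological group acting continuously on X by continuous linear maps, with each g ∈ G mapping C into C; let θ be the Haar probability measure on G. Let u ∈ C be a minimizer of F : X → ℝ over C with F(g·u) = F(u) for all g ∈ G, and suppose F is lower semi-continuous and convex on the closed convex hull K of the orbit G·u (i.e. F restricted to K is convex and lower semi-continuous). Then the G-average u_G := ∫_G g·u dθ(g) lies in C, is G-invariant, and is a minimizer of F over C. -/
/-!
The average `u_G` lies in `C` because `C` is closed, convex and contains the orbit, and it is
fixed by every `h` because `h` commutes with the Bochner integral and `θ` is left invariant.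
For minimality, `F ≤ F u` on the orbit, hence on its convex hull by convexity, hence on its
closure `K` by lower semi-continuity; since `u_G ∈ K`, `F u_G ≤ F u ≤ F v` for `v ∈ C`.
-/

open MeasureTheory Set

theorem LowerSemicontinuousOn.le_of_mem_closure {α γ : Type*} [TopologicalSpace α]
    [LinearOrder γ] {f : α → γ} {s t : Set α} {x : α} {c : γ}
    (hf : LowerSemicontinuousOn f s) (hts : t ⊆ s) (hle : ∀ y ∈ t, f y ≤ c)
    (hxs : x ∈ s) (hxt : x ∈ closure t) : f x ≤ c := by
  obtain ⟨v, hv, hsv⟩ := lowerSemicontinuousOn_iff_preimage_Iic.mp hf c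
  have htv : t ⊆ v := fun y hy => (hsv.subset ⟨hts hy, hle y hy⟩).2
  exact (hsv.symm.subset ⟨hxs, hv.closure_subset_iff.mpr htv hxt⟩).2

theorem ConvexOn.le_of_mem_closure_convexHull {𝕜 E β : Type*} [Field 𝕜] [LinearOrder 𝕜]
    [IsStrictOrderedRing 𝕜] [AddCommGroup E] [Module 𝕜 E] [TopologicalSpace E]
    [AddCommGroup β] [LinearOrder β] [IsOrderedAddMonoid β] [Module 𝕜 β]
    [IsStrictOrderedModule 𝕜 β] {s : Set E} {f : E → β} {c : β} {x : E}
    (hf : ConvexOn 𝕜 (closure (convexHull 𝕜 s)) f)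
    (hf' : LowerSemicontinuousOn f (closure (convexHull 𝕜 s)))
    (hle : ∀ y ∈ s, f y ≤ c) (hx : x ∈ closure (convexHull 𝕜 s)) : f x ≤ c := by
  refine hf'.le_of_mem_closure subset_closure (fun y hy => ?_) hx hx
  obtain ⟨z, hz, hyz⟩ :=
    hf.exists_ge_of_mem_convexHull ((subset_convexHull 𝕜 s).trans subset_closure) hy
  exact hyz.trans (hle z hz)

theorem integral_mem_closure_convexHull_range {α E : Type*} [MeasurableSpace α]
    [NormedAddCommGroup E] [NormedSpace ℝ E] [CompleteSpace E] {μ : Measure α}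
    [IsProbabilityMeasure μ] {f : α → E} (hf : Integrable f μ) :
    ∫ x, f x ∂μ ∈ closure (convexHull ℝ (range f)) :=
  (convex_convexHull ℝ _).closure.integral_mem isClosed_closure
    (ae_of_all _ fun x => subset_closure (subset_convexHull ℝ _ (mem_range_self x))) hf

theorem smul_integral_smul_eq_integral {G E : Type*} [Group G] [MeasurableSpace G]
    [MeasurableMul G] (μ : Measure G) [μ.IsMulLeftInvariant] [NormedAddCommGroup E]
    [NormedSpace ℝ E] [DistribMulAction G E] [ContinuousConstSMul G E] [SMulCommClass G ℝ E]
    (u : E) (h : G) : h • ∫ g, g • u ∂μ = ∫ g, g • u ∂μ := by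
  calc h • ∫ g, g • u ∂μ = ∫ g, h • g • u ∂μ :=
        ((ContinuousLinearEquiv.smulLeft (R₁ := ℝ) h).integral_comp_comm _).symm
    _ = ∫ g, (h * g) • u ∂μ := by simp only [mul_smul]
    _ = ∫ g, g • u ∂μ := integral_mul_left_eq_self (fun g => g • u) h

theorem exists_invariant_minimizer_convexOnOrbitHull_general
    {X : Type*} [NormedAddCommGroup X] [NormedSpace ℝ X] [CompleteSpace X]
    {G : Type*} [Group G] [TopologicalSpace G] [IsTopologicalGroup G] [CompactSpace G]
    [MeasurableSpace G] [BorelSpace G]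
    [DistribMulAction G X] [SMulCommClass G ℝ X] [ContinuousSMul G X]
    (C : Set X) (hCclosed : IsClosed C) (hCconvex : Convex ℝ C)
    (hmaps : ∀ g : G, ∀ x ∈ C, g • x ∈ C)
    (θ : Measure G) [θ.IsHaarMeasure] [IsProbabilityMeasure θ]
    (F : X → ℝ) (u : X) (huC : u ∈ C) (hmin : ∀ v ∈ C, F u ≤ F v)
    (hinv : ∀ g : G, F (g • u) = F u)
    (K : Set X) (hK : K = closure (convexHull ℝ (Set.range fun g : G => g • u)))
    (hFconv : ConvexOn ℝ K F) (hFlsc : LowerSemicontinuousOn F K) :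
    (∫ g, g • u ∂θ) ∈ C ∧
      (∀ h : G, h • (∫ g, g • u ∂θ) = ∫ g, g • u ∂θ) ∧
      (∀ v ∈ C, F (∫ g, g • u ∂θ) ≤ F v) := by
  subst hK
  have horbit_int : Integrable (fun g : G => g • u) θ :=
    (continuous_id.smul continuous_const).integrable_of_hasCompactSupport
      (HasCompactSupport.of_compactSpace _)
  refine ⟨hCconvex.integral_mem hCclosed (ae_of_all _ fun g => hmaps g u huC) horbit_int,
    smul_integral_smul_eq_integral θ u, fun v hv => ?_⟩
  have hle_orbit : ∀ y ∈ range fun g : G => g • u, F y ≤ F u := by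
    rintro _ ⟨g, rfl⟩
    exact (hinv g).le
  exact (hFconv.le_of_mem_closure_convexHull hFlsc hle_orbit
    (integral_mem_closure_convexHull_range horbit_int)).trans (hmin v hv)

/-- Let `X` be a real Banach space, `C ⊆ X` closed and convex, and `G` a compact
topological group acting continuously on `X` by continuous linear maps preserving `C`; let `θ` be
the Haar probability measure on `G`. Let `u ∈ C` minimize `F : X → ℝ` over `C` with
`F (g • u) = F u` for all `g`, and suppose `F` is lower semi-continuous and convex on the closed
convex hull `K` of the orbit `G • u`. Then the `G`-average `u_G := ∫_G g • u dθ(g)` lies in `C`,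
is `G`-invariant, and is a minimizer of `F` over `C`. -/
theorem exists_invariant_minimizer_convexOnOrbitHull
    {X : Type*} [NormedAddCommGroup X] [NormedSpace ℝ X] [CompleteSpace X]
    {G : Type*} [Group G] [TopologicalSpace G] [IsTopologicalGroup G] [CompactSpace G]
    [MeasurableSpace G] [BorelSpace G]
    [DistribMulAction G X] [SMulCommClass G ℝ X] [ContinuousSMul G X]
    (C : Set X) (hCclosed : IsClosed C) (hCconvex : Convex ℝ C)
    (hmaps : ∀ g : G, ∀ x ∈ C, g • x ∈ C)
    (θ : Measure G) [θ.IsHaarMeasure] [θ.IsMulRightInvariant] [IsProbabilityMeasure θ]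
    (F : X → ℝ) (u : X) (huC : u ∈ C) (hmin : ∀ v ∈ C, F u ≤ F v)
    (hinv : ∀ g : G, F (g • u) = F u)
    (K : Set X) (hK : K = closure (convexHull ℝ (Set.range fun g : G => g • u)))
    (hFconv : ConvexOn ℝ K F) (hFlsc : LowerSemicontinuousOn F K) :
    (∫ g, g • u ∂θ) ∈ C ∧
      (∀ h : G, h • (∫ g, g • u ∂θ) = ∫ g, g • u ∂θ) ∧
      (∀ v ∈ C, F (∫ g, g • u ∂θ) ≤ F v) :=
  exists_invariant_minimizer_convexOnOrbitHull_general C hCclosed hCconvex hmaps θ F u huC hmin hinv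
    K hK hFconv hFlsc
end

section
/- Let X be a real Banach space, G a compact topological group acting continuously on X by continuous linear maps, θ the Haar probability measure on G, u ∈ X, and u_G := ∫_G g·u dθ(g). Let F : X → ℝ satisfy F(g·u) = F(u) for all g ∈ G, and suppose there is a continuous linear functional β* ∈ X* such that F(x) ≥ F(u_G) + β*(x − u_G) for all x in the orbit G·u. Then F(u_G) ≤ F(u). -/
open MeasureTheory

/-!
Integrating the subgradient inequality `F (g • u) ≥ F u_G + β* (g • u - u_G)` against `θ` kills
the linear term, since `β*` commutes with the Bochner integral and `u_G` is the mean of the orbit;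
what remains is `F u_G ≤ ∫ F (g • u) dθ(g) = F u`.
-/

section SubgradientJensen

variable {α E : Type*} [MeasurableSpace α] [NormedAddCommGroup E] [NormedSpace ℝ E]
  [CompleteSpace E] {μ : Measure α} [IsProbabilityMeasure μ] {f : α → E}

theorem ContinuousLinearMap.integral_comp_sub_integral_eq_zero (β : E →L[ℝ] ℝ)
    (hf : Integrable f μ) : ∫ a, β (f a - ∫ b, f b ∂μ) ∂μ = 0 := by
  have hfc : Integrable (fun a => f a - ∫ b, f b ∂μ) μ := hf.sub (integrable_const _)
  rw [β.integral_comp_comm hfc, integral_sub hf (integrable_const _),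
    integral_const, probReal_univ, one_smul, sub_self, map_zero]

theorem le_integral_of_subgradient_at_integral {F : E → ℝ} (β : E →L[ℝ] ℝ)
    (hf : Integrable f μ) (hFf : Integrable (fun a => F (f a)) μ)
    (hsub : ∀ a, F (∫ b, f b ∂μ) + β (f a - ∫ b, f b ∂μ) ≤ F (f a)) :
    F (∫ b, f b ∂μ) ≤ ∫ a, F (f a) ∂μ := by
  have hβf : Integrable (fun a => β (f a - ∫ b, f b ∂μ)) μ :=
    β.integrable_comp (hf.sub (integrable_const (∫ b, f b ∂μ)))
  calc F (∫ b, f b ∂μ)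
      = ∫ a, (F (∫ b, f b ∂μ) + β (f a - ∫ b, f b ∂μ)) ∂μ := by
        rw [integral_add (integrable_const _) hβf, β.integral_comp_sub_integral_eq_zero hf,
          integral_const, probReal_univ, one_smul, add_zero]
    _ ≤ ∫ a, F (f a) ∂μ := integral_mono ((integrable_const _).add hβf) hFf hsub

end SubgradientJensen

theorem gAverage_le_of_subgradient_general
    {X : Type*} [NormedAddCommGroup X] [NormedSpace ℝ X] [CompleteSpace X]
    {G : Type*} [Group G] [TopologicalSpace G] [CompactSpace G]
    [MeasurableSpace G] [BorelSpace G]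
    [DistribMulAction G X] [ContinuousSMul G X]
    (θ : Measure G) [IsProbabilityMeasure θ]
    (F : X → ℝ) (u : X)
    (hinv : ∀ g : G, F (g • u) = F u)
    (β : X →L[ℝ] ℝ)
    (hsub : ∀ x ∈ (Set.range fun g : G => g • u),
      F x ≥ F (∫ g, g • u ∂θ) + β (x - ∫ g, g • u ∂θ)) :
    F (∫ g, g • u ∂θ) ≤ F u := by
  have horbit : Integrable (fun g : G => g • u) θ :=
    (continuous_id.smul continuous_const).integrable_of_hasCompactSupport (.of_compactSpace _)
  calc F (∫ g, g • u ∂θ)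
      ≤ ∫ g, F (g • u) ∂θ :=
        le_integral_of_subgradient_at_integral β horbit
          (by simp only [hinv]; exact integrable_const _) fun g => hsub (g • u) ⟨g, rfl⟩
    _ = F u := by simp [hinv]

/-- Let `X` be a real Banach space, `G` a compact topological group acting
continuously on `X` by continuous linear maps, `θ` the Haar probability measure on `G`, `u ∈ X`,
and `u_G := ∫_G g • u dθ(g)`. Let `F : X → ℝ` satisfy `F (g • u) = F u` for all `g ∈ G`, and
suppose there is a continuous linear functional `β* ∈ X*` such that
`F x ≥ F u_G + β* (x − u_G)` for all `x` in the orbit `G • u`. Then `F u_G ≤ F u`. -/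
theorem gAverage_le_of_subgradient
    {X : Type*} [NormedAddCommGroup X] [NormedSpace ℝ X] [CompleteSpace X]
    {G : Type*} [Group G] [TopologicalSpace G] [IsTopologicalGroup G] [CompactSpace G]
    [MeasurableSpace G] [BorelSpace G]
    [DistribMulAction G X] [SMulCommClass G ℝ X] [ContinuousSMul G X]
    (θ : Measure G) [θ.IsHaarMeasure] [IsProbabilityMeasure θ]
    (F : X → ℝ) (u : X)
    (hinv : ∀ g : G, F (g • u) = F u)
    (β : X →L[ℝ] ℝ)
    (hsub : ∀ x ∈ (Set.range fun g : G => g • u),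
      F x ≥ F (∫ g, g • u ∂θ) + β (x - ∫ g, g • u ∂θ)) :
    F (∫ g, g • u ∂θ) ≤ F u :=
  gAverage_le_of_subgradient_general θ F u hinv β hsub
end
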